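/- arXiv:1911.04216 — 2 statements merged into one kernel-verified Lean document; each statement's English description precedes it below -/
import Mathlib

section
/- If R is a strongly G-graded k-algebra with A = R_1, then the induction functor R ⊗_A − : A-Mod → R-Gr is an equivalence of categories, with quasi-inverse the functor sending a graded module M to its identity component M_1. -/
set_option linter.unusedVariables false
set_option linter.unusedSectionVars false
set_option synthInstance.maxHeartbeats 1000000
set_option maxHeartbeats 1000000
/-! ### Library: basics on group-graded algebras.
The group `G` is written additively (an additive group is the same thing as a group);
the identity component is `ℛ 0`. -/

section GradedLib

variable {k R G : Type*} [CommRing k] [Ring R] [Algebra k R] [AddGroup G]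
variable (ℛ : G → Submodule k R) [SetLike.GradedMonoid ℛ]

/-- `R` is *strongly graded* if `ℛ g * ℛ h = ℛ (g + h)` for all `g h`. -/
def IsStronglyGraded : Prop := ∀ g h : G, ℛ g * ℛ h = ℛ (g + h)

namespace GrComp

variable {ℛ}

lemma mul_mem_shift {g h : G} {x y : R} (hx : x ∈ ℛ g) (hy : y ∈ ℛ h) :
    x * y ∈ ℛ (g + h) := SetLike.GradedMul.mul_mem hx hy

variable (ℛ)

/-- Left action of the identity component on each component, by multiplication. -/
instance instSMul (g : G) : SMul ↥(ℛ 0) ↥(ℛ g) :=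
  ⟨fun a x => ⟨(a : R) * (x : R), by
    have := mul_mem_shift a.2 x.2; rwa [zero_add] at this⟩⟩

@[simp] lemma coe_smul (g : G) (a : ↥(ℛ 0)) (x : ↥(ℛ g)) :
    ((a • x : ↥(ℛ g)) : R) = (a : R) * (x : R) := rfl

/-- Each component is a left module over the identity component. -/
instance instModule (g : G) : Module ↥(ℛ 0) ↥(ℛ g) where
  one_smul x := Subtype.ext (one_mul (x : R))
  mul_smul a b x := Subtype.ext (mul_assoc (a : R) (b : R) (x : R))
  smul_zero a := Subtype.ext (mul_zero (a : R))
  smul_add a x y := Subtype.ext (mul_add (a : R) (x : R) (y : R))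
  add_smul a b x := Subtype.ext (add_mul (a : R) (b : R) (x : R))
  zero_smul x := Subtype.ext (zero_mul (x : R))

/-- Right action of the identity component on each component, by multiplication. -/
instance instSMulOp (g : G) : SMul (↥(ℛ 0))ᵐᵒᵖ ↥(ℛ g) :=
  ⟨fun a x => ⟨(x : R) * (a.unop : R), by
    have := mul_mem_shift x.2 a.unop.2; rwa [add_zero] at this⟩⟩

@[simp] lemma coe_smul_op (g : G) (a : (↥(ℛ 0))ᵐᵒᵖ) (x : ↥(ℛ g)) :
    ((a • x : ↥(ℛ g)) : R) = (x : R) * (a.unop : R) := rfl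

/-- Each component is a right module over the identity component. -/
instance instModuleOp (g : G) : Module (↥(ℛ 0))ᵐᵒᵖ ↥(ℛ g) where
  one_smul x := Subtype.ext (mul_one (x : R))
  mul_smul a b x := Subtype.ext (mul_assoc (x : R) (b.unop : R) (a.unop : R)).symm
  smul_zero a := Subtype.ext (zero_mul _)
  smul_add a x y := Subtype.ext (add_mul (x : R) (y : R) (a.unop : R))
  add_smul a b x := Subtype.ext (mul_add (x : R) (a.unop : R) (b.unop : R))
  zero_smul x := Subtype.ext (mul_zero (x : R))

/-- The two actions commute: components are bimodules. -/
instance instSMulCommClass (g : G) :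
    SMulCommClass ↥(ℛ 0) (↥(ℛ 0))ᵐᵒᵖ ↥(ℛ g) :=
  ⟨fun a b x => Subtype.ext (mul_assoc (a : R) (x : R) (b.unop : R)).symm⟩

end GrComp

end GradedLib

section RAsBimodule

variable {k R G : Type*} [CommRing k] [Ring R] [Algebra k R] [AddGroup G]
variable (ℛ : G → Submodule k R) [SetLike.GradedMonoid ℛ]

/-- The identity component acts on `R` on the left, by multiplication. -/
instance GrComp.instModuleSelfLeft : Module ↥(ℛ 0) R where
  smul a r := (a : R) * r
  one_smul r := one_mul r
  mul_smul a b r := mul_assoc (a : R) (b : R) r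
  smul_zero a := mul_zero (a : R)
  smul_add a r s := mul_add (a : R) r s
  add_smul a b r := add_mul (a : R) (b : R) r
  zero_smul r := zero_mul r

@[simp] lemma GrComp.smul_self_left_def (a : ↥(ℛ 0)) (r : R) :
    a • r = (a : R) * r := rfl

/-- The identity component acts on `R` on the right, by multiplication. -/
instance GrComp.instModuleSelfRight : Module (↥(ℛ 0))ᵐᵒᵖ R where
  smul a r := r * (a.unop : R)
  one_smul r := mul_one r
  mul_smul a b r := (mul_assoc r (b.unop : R) (a.unop : R)).symm
  smul_zero a := zero_mul _
  smul_add a r s := add_mul r s (a.unop : R)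
  add_smul a b r := mul_add r (a.unop : R) (b.unop : R)
  zero_smul r := mul_zero r

@[simp] lemma GrComp.smul_self_right_def (a : (↥(ℛ 0))ᵐᵒᵖ) (r : R) :
    a • r = r * (a.unop : R) := rfl

instance GrComp.instSMulCommClassSelf :
    SMulCommClass R (↥(ℛ 0))ᵐᵒᵖ R :=
  ⟨fun r a x => (mul_assoc r x (a.unop : R)).symm⟩

instance GrComp.instSMulCommClassSelf' :
    SMulCommClass ↥(ℛ 0) (↥(ℛ 0))ᵐᵒᵖ R :=
  ⟨fun a b x => (mul_assoc (a : R) x (b.unop : R)).symm⟩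

end RAsBimodule
/-! ### Library: tensor product `M ⊗[A] N` over a possibly noncommutative ring `A`,
for a right `A`-module `M` and a left `A`-module `N`, realized as a quotient of `M ⊗[ℤ] N`. -/

noncomputable section NCTensorLib

open TensorProduct MulOpposite

/-- The subgroup of relations defining the balanced tensor product. -/
def NCT.rels (A : Type*) [Ring A] (M N : Type*) [AddCommGroup M] [AddCommGroup N]
    [Module Aᵐᵒᵖ M] [Module A N] : AddSubgroup (M ⊗[ℤ] N) :=
  AddSubgroup.closure
    {z | ∃ (a : A) (m : M) (n : N), z = (op a • m) ⊗ₜ[ℤ] n - m ⊗ₜ[ℤ] (a • n)}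

/-- The tensor product over `A` of a right `A`-module and a left `A`-module. -/
def NCT (A : Type*) [Ring A] (M N : Type*) [AddCommGroup M] [AddCommGroup N]
    [Module Aᵐᵒᵖ M] [Module A N] : Type _ :=
  (M ⊗[ℤ] N) ⧸ NCT.rels A M N

namespace NCT

variable {A : Type*} [Ring A] {M N : Type*} [AddCommGroup M] [AddCommGroup N]
  [Module Aᵐᵒᵖ M] [Module A N]

instance : AddCommGroup (NCT A M N) :=
  QuotientAddGroup.Quotient.addCommGroup _

/-- The canonical generator `m ⊗ n` of `NCT A M N`. -/
def mk (A : Type*) [Ring A] {M N : Type*} [AddCommGroup M] [AddCommGroup N]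
    [Module Aᵐᵒᵖ M] [Module A N] (m : M) (n : N) : NCT A M N :=
  QuotientAddGroup.mk (m ⊗ₜ[ℤ] n)

lemma mk_balanced (a : A) (m : M) (n : N) :
    mk A (op a • m) n = mk A m (a • n) := by
  refine QuotientAddGroup.eq.2 ?_
  have : -((op a • m) ⊗ₜ[ℤ] n) + m ⊗ₜ[ℤ] (a • n)
      = -((op a • m) ⊗ₜ[ℤ] n - m ⊗ₜ[ℤ] (a • n)) := by abel
  rw [this]
  exact neg_mem (AddSubgroup.subset_closure ⟨a, m, n, rfl⟩)

lemma mk_add_left (m m' : M) (n : N) :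
    mk A (m + m') n = mk A m n + mk A m' n := by
  show QuotientAddGroup.mk _ = _
  rw [add_tmul]; rfl

lemma mk_add_right (m : M) (n n' : N) :
    mk A m (n + n') = mk A m n + mk A m n' := by
  show QuotientAddGroup.mk _ = _
  rw [tmul_add]; rfl

section LeftModule

variable {C : Type*} [Ring C] [Module C M] [SMulCommClass C Aᵐᵒᵖ M]

/-- Auxiliary endomorphism of `M ⊗[ℤ] N` induced by the action of `c : C` on `M`. -/
def lAux (N : Type*) [AddCommGroup N] (c : C) : (M ⊗[ℤ] N) →ₗ[ℤ] (M ⊗[ℤ] N) :=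
  TensorProduct.map (DistribMulAction.toAddMonoidHom M c).toIntLinearMap LinearMap.id

lemma lAux_tmul (c : C) (m : M) (n : N) :
    lAux N c (m ⊗ₜ[ℤ] n) = (c • m) ⊗ₜ[ℤ] n := rfl

lemma rels_le_comap_lAux (A : Type*) [Ring A] [Module Aᵐᵒᵖ M] [Module A N]
    [SMulCommClass C Aᵐᵒᵖ M] (c : C) :
    NCT.rels A M N ≤ (NCT.rels A M N).comap (lAux N c).toAddMonoidHom := by
  refine (AddSubgroup.closure_le _).2 ?_
  rintro z ⟨a, m, n, rfl⟩
  refine AddSubgroup.mem_comap.2 ?_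
  have h : lAux N c ((op a • m) ⊗ₜ[ℤ] n - m ⊗ₜ[ℤ] (a • n))
      = (op a • (c • m)) ⊗ₜ[ℤ] n - (c • m) ⊗ₜ[ℤ] (a • n) := by
    rw [map_sub, lAux_tmul, lAux_tmul, smul_comm]
  rw [LinearMap.toAddMonoidHom_coe, h]
  exact AddSubgroup.subset_closure ⟨a, c • m, n, rfl⟩

/-- The action of `c : C` on the balanced tensor product, via the left factor. -/
def lsmul (c : C) : NCT A M N →+ NCT A M N :=
  QuotientAddGroup.map _ _ (lAux N c).toAddMonoidHom (rels_le_comap_lAux A c)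

lemma lsmul_mk (c : C) (m : M) (n : N) :
    lsmul c (mk A m n) = mk A (c • m) n := by
  show QuotientAddGroup.mk _ = _
  rfl

instance instModuleLeft : Module C (NCT A M N) where
  smul c x := lsmul c x
  one_smul x := by
    refine QuotientAddGroup.induction_on x (fun z => ?_)
    show QuotientAddGroup.mk (lAux N (1 : C) z) = QuotientAddGroup.mk z
    congr 1
    have h1 : lAux (M := M) N (1 : C) = LinearMap.id := by
      apply TensorProduct.ext'
      intro m n
      show ((1 : C) • m) ⊗ₜ[ℤ] n = m ⊗ₜ[ℤ] n
      rw [one_smul]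
    rw [h1]; rfl
  mul_smul c d x := by
    refine QuotientAddGroup.induction_on x (fun z => ?_)
    show QuotientAddGroup.mk (lAux N (c * d) z)
      = QuotientAddGroup.mk (lAux N c (lAux N d z))
    congr 1
    have h1 : lAux (M := M) N (c * d) = (lAux N c).comp (lAux N d) := by
      apply TensorProduct.ext'
      intro m n
      show ((c * d) • m) ⊗ₜ[ℤ] n = (c • (d • m)) ⊗ₜ[ℤ] n
      rw [mul_smul]
    rw [h1]; rfl
  smul_zero c := map_zero (lsmul (A := A) (M := M) (N := N) c)
  smul_add c x y := map_add (lsmul (A := A) (M := M) (N := N) c) x y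
  add_smul c d x := by
    refine QuotientAddGroup.induction_on x (fun z => ?_)
    show QuotientAddGroup.mk (lAux N (c + d) z)
      = QuotientAddGroup.mk (lAux N c z) + QuotientAddGroup.mk (lAux N d z)
    have h1 : lAux (M := M) N (c + d) = lAux N c + lAux N d := by
      apply TensorProduct.ext'
      intro m n
      show ((c + d) • m) ⊗ₜ[ℤ] n = (c • m) ⊗ₜ[ℤ] n + (d • m) ⊗ₜ[ℤ] n
      rw [add_smul, add_tmul]
    rw [h1]; rfl
  zero_smul x := by
    refine QuotientAddGroup.induction_on x (fun z => ?_)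
    show QuotientAddGroup.mk (lAux N (0 : C) z) = 0
    have h1 : lAux (M := M) N (0 : C) = 0 := by
      apply TensorProduct.ext'
      intro m n
      show ((0 : C) • m) ⊗ₜ[ℤ] n = 0
      rw [zero_smul, zero_tmul]
    rw [h1]; rfl

lemma smul_mk (c : C) (m : M) (n : N) :
    c • mk A m n = mk A (c • m) n := lsmul_mk c m n

end LeftModule

section RightModule

variable {C : Type*} [Ring C] [Module C N] [SMulCommClass A C N]

/-- Auxiliary endomorphism of `M ⊗[ℤ] N` induced by the action of `c : C` on `N`. -/
def rAux (M : Type*) [AddCommGroup M] (c : C) : (M ⊗[ℤ] N) →ₗ[ℤ] (M ⊗[ℤ] N) :=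
  TensorProduct.map LinearMap.id (DistribMulAction.toAddMonoidHom N c).toIntLinearMap

lemma rAux_tmul (c : C) (m : M) (n : N) :
    rAux M c (m ⊗ₜ[ℤ] n) = m ⊗ₜ[ℤ] (c • n) := rfl

lemma rels_le_comap_rAux (c : C) :
    NCT.rels A M N ≤ (NCT.rels A M N).comap (rAux M c).toAddMonoidHom := by
  refine (AddSubgroup.closure_le _).2 ?_
  rintro z ⟨a, m, n, rfl⟩
  refine AddSubgroup.mem_comap.2 ?_
  have h : rAux M c ((op a • m) ⊗ₜ[ℤ] n - m ⊗ₜ[ℤ] (a • n))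
      = (op a • m) ⊗ₜ[ℤ] (c • n) - m ⊗ₜ[ℤ] (a • (c • n)) := by
    rw [map_sub, rAux_tmul, rAux_tmul, ← smul_comm a c n]
  rw [LinearMap.toAddMonoidHom_coe, h]
  exact AddSubgroup.subset_closure ⟨a, m, c • n, rfl⟩

/-- The action of `c : C` on the balanced tensor product, via the right factor. -/
def rsmul (c : C) : NCT A M N →+ NCT A M N :=
  QuotientAddGroup.map _ _ (rAux M c).toAddMonoidHom (rels_le_comap_rAux c)

lemma rsmul_mk (c : C) (m : M) (n : N) :
    rsmul c (mk A m n) = mk A m (c • n) := by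
  show QuotientAddGroup.mk _ = _
  rfl

instance instModuleRight : Module C (NCT A M N) where
  smul c x := rsmul c x
  one_smul x := by
    refine QuotientAddGroup.induction_on x (fun z => ?_)
    show QuotientAddGroup.mk (rAux M (1 : C) z) = QuotientAddGroup.mk z
    congr 1
    have h1 : rAux (N := N) M (1 : C) = LinearMap.id := by
      apply TensorProduct.ext'
      intro m n
      show m ⊗ₜ[ℤ] ((1 : C) • n) = m ⊗ₜ[ℤ] n
      rw [one_smul]
    rw [h1]; rfl
  mul_smul c d x := by
    refine QuotientAddGroup.induction_on x (fun z => ?_)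
    show QuotientAddGroup.mk (rAux M (c * d) z)
      = QuotientAddGroup.mk (rAux M c (rAux M d z))
    congr 1
    have h1 : rAux (N := N) M (c * d) = (rAux M c).comp (rAux M d) := by
      apply TensorProduct.ext'
      intro m n
      show m ⊗ₜ[ℤ] ((c * d) • n) = m ⊗ₜ[ℤ] (c • (d • n))
      rw [mul_smul]
    rw [h1]; rfl
  smul_zero c := map_zero (rsmul (A := A) (M := M) (N := N) c)
  smul_add c x y := map_add (rsmul (A := A) (M := M) (N := N) c) x y
  add_smul c d x := by
    refine QuotientAddGroup.induction_on x (fun z => ?_)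
    show QuotientAddGroup.mk (rAux M (c + d) z)
      = QuotientAddGroup.mk (rAux M c z) + QuotientAddGroup.mk (rAux M d z)
    have h1 : rAux (N := N) M (c + d) = rAux M c + rAux M d := by
      apply TensorProduct.ext'
      intro m n
      show m ⊗ₜ[ℤ] ((c + d) • n) = m ⊗ₜ[ℤ] (c • n) + m ⊗ₜ[ℤ] (d • n)
      rw [add_smul, tmul_add]
    rw [h1]; rfl
  zero_smul x := by
    refine QuotientAddGroup.induction_on x (fun z => ?_)
    show QuotientAddGroup.mk (rAux M (0 : C) z) = 0
    have h1 : rAux (N := N) M (0 : C) = 0 := by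
      apply TensorProduct.ext'
      intro m n
      show m ⊗ₜ[ℤ] ((0 : C) • n) = 0
      rw [zero_smul, tmul_zero]
    rw [h1]; rfl

lemma smul_mk_right (c : C) (m : M) (n : N) :
    c • mk A m n = mk A m (c • n) := rsmul_mk c m n

end RightModule

section Map

variable {N' : Type*} [AddCommGroup N'] [Module A N']

/-- Functoriality of the balanced tensor product in the right variable. -/
def mapRight (f : N →ₗ[A] N') : NCT A M N →+ NCT A M N' :=
  QuotientAddGroup.map _ _
    (TensorProduct.map LinearMap.id f.toAddMonoidHom.toIntLinearMap).toAddMonoidHom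
    (by
      refine (AddSubgroup.closure_le _).2 ?_
      rintro z ⟨a, m, n, rfl⟩
      refine AddSubgroup.mem_comap.2 ?_
      have h : TensorProduct.map LinearMap.id f.toAddMonoidHom.toIntLinearMap
          ((op a • m) ⊗ₜ[ℤ] n - m ⊗ₜ[ℤ] (a • n))
          = (op a • m) ⊗ₜ[ℤ] (f n) - m ⊗ₜ[ℤ] (a • f n) := by
        rw [map_sub]
        congr 1
        show m ⊗ₜ[ℤ] (f (a • n)) = m ⊗ₜ[ℤ] (a • f n)
        rw [map_smul]
      rw [LinearMap.toAddMonoidHom_coe, h]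
      exact AddSubgroup.subset_closure ⟨a, m, f n, rfl⟩)

lemma mapRight_mk (f : N →ₗ[A] N') (m : M) (n : N) :
    mapRight (M := M) f (mk A m n) = mk A m (f n) := by
  show QuotientAddGroup.mk _ = _
  rfl

variable {C : Type*} [Ring C] [Module C M] [SMulCommClass C Aᵐᵒᵖ M]

/-- Bundled `C`-linear version of `mapRight`, for the module structure via the left factor. -/
def lmapRight (f : N →ₗ[A] N') : NCT A M N →ₗ[C] NCT A M N' where
  toFun := mapRight f
  map_add' := map_add _
  map_smul' c x := by
    refine QuotientAddGroup.induction_on x (fun z => ?_)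
    show (QuotientAddGroup.mk
        (TensorProduct.map LinearMap.id f.toAddMonoidHom.toIntLinearMap (lAux N c z))
        : NCT A M N')
      = (QuotientAddGroup.mk
        (lAux N' c (TensorProduct.map LinearMap.id f.toAddMonoidHom.toIntLinearMap z))
        : NCT A M N')
    congr 1
    have h : (TensorProduct.map (LinearMap.id : M →ₗ[ℤ] M)
          f.toAddMonoidHom.toIntLinearMap).comp (lAux (M := M) N c)
        = (lAux (M := M) N' c).comp
            (TensorProduct.map (LinearMap.id : M →ₗ[ℤ] M) f.toAddMonoidHom.toIntLinearMap) := by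
      apply TensorProduct.ext'
      intro m n
      rfl
    exact LinearMap.congr_fun h z

lemma lmapRight_mk (f : N →ₗ[A] N') (m : M) (n : N) :
    (lmapRight f : NCT A M N →ₗ[C] NCT A M N') (mk A m n) = mk A m (f n) := rfl

end Map

section MapLeft

variable {M' : Type*} [AddCommGroup M'] [Module Aᵐᵒᵖ M']

/-- Functoriality of the balanced tensor product in the left variable, for a right
`A`-linear map. -/
def mapLeft (g : M →+ M') (hg : ∀ (a : Aᵐᵒᵖ) (m : M), g (a • m) = a • g m) :
    NCT A M N →+ NCT A M' N :=
  QuotientAddGroup.map _ _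
    (TensorProduct.map g.toIntLinearMap LinearMap.id).toAddMonoidHom
    (by
      refine (AddSubgroup.closure_le _).2 ?_
      rintro z ⟨a, m, n, rfl⟩
      refine AddSubgroup.mem_comap.2 ?_
      have h : TensorProduct.map g.toIntLinearMap LinearMap.id
          ((op a • m) ⊗ₜ[ℤ] n - m ⊗ₜ[ℤ] (a • n))
          = (op a • g m) ⊗ₜ[ℤ] n - (g m) ⊗ₜ[ℤ] (a • n) := by
        rw [map_sub]
        congr 1
        show (g (op a • m)) ⊗ₜ[ℤ] n = _
        rw [hg]
      rw [LinearMap.toAddMonoidHom_coe, h]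
      exact AddSubgroup.subset_closure ⟨a, g m, n, rfl⟩)

lemma mapLeft_mk (g : M →+ M') (hg : ∀ (a : Aᵐᵒᵖ) (m : M), g (a • m) = a • g m)
    (m : M) (n : N) : mapLeft (N := N) g hg (mk A m n) = mk A (g m) n := by
  show QuotientAddGroup.mk _ = _
  rfl

end MapLeft

end NCT

end NCTensorLib
/-! ### Library: `G`-graded `R`-modules over a `G`-graded algebra `R`,
and the category `R`-Gr of graded modules with degree-preserving `R`-linear maps. -/

universe v

section GrModLib

variable {k R G : Type*} [CommRing k] [Ring R] [Algebra k R] [AddGroup G] [DecidableEq G]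
variable (ℛ : G → Submodule k R) [SetLike.GradedMonoid ℛ]

/-- A `G`-graded `R`-module: an `R`-module together with a grading by additive
subgroups, compatible with the grading of `R`, which decomposes it as a direct sum. -/
structure GrMod where
  carrier : Type v
  [acg : AddCommGroup carrier]
  [mod : Module R carrier]
  grading : G → AddSubgroup carrier
  smul_mem' : ∀ {g h : G} {r : R} {m : carrier},
    r ∈ ℛ g → m ∈ grading h → r • m ∈ grading (g + h)
  internal' : DirectSum.IsInternal grading

attribute [instance] GrMod.acg GrMod.mod

namespace GrMod

instance : CoeSort (GrMod.{v} ℛ) (Type v) := ⟨carrier⟩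

variable {ℛ}

/-- The identity component `ℛ 0` acts on every component of a graded module. -/
instance instSMulComp (M : GrMod.{v} ℛ) (h : G) :
    SMul ↥(ℛ 0) ↥(M.grading h) :=
  ⟨fun a x => ⟨(a : R) • (x : M.carrier), by
    have := M.smul_mem' a.2 x.2; rwa [zero_add] at this⟩⟩

@[simp] lemma coe_smul_comp (M : GrMod.{v} ℛ) (h : G) (a : ↥(ℛ 0)) (x : ↥(M.grading h)) :
    ((a • x : ↥(M.grading h)) : M.carrier) = (a : R) • (x : M.carrier) := rfl

/-- Every component of a graded module is a module over the identity component. -/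
instance instModuleComp (M : GrMod.{v} ℛ) (h : G) :
    Module ↥(ℛ 0) ↥(M.grading h) where
  one_smul x := Subtype.ext (one_smul R (x : M.carrier))
  mul_smul a b x := Subtype.ext (mul_smul (a : R) (b : R) (x : M.carrier))
  smul_zero a := Subtype.ext (smul_zero (a : R))
  smul_add a x y := Subtype.ext (smul_add (a : R) (x : M.carrier) (y : M.carrier))
  add_smul a b x := Subtype.ext (add_smul (a : R) (b : R) (x : M.carrier))
  zero_smul x := Subtype.ext (zero_smul R (x : M.carrier))

variable (ℛ)

/-- Morphisms of graded modules: `R`-linear maps preserving the grading. -/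
@[ext] structure Hom (M N : GrMod.{v} ℛ) where
  toLin : M.carrier →ₗ[R] N.carrier
  grades : ∀ (g : G) (x : M.carrier), x ∈ M.grading g → toLin x ∈ N.grading g

/-- The category `R`-Gr of `G`-graded `R`-modules. -/
instance : CategoryTheory.Category (GrMod.{v} ℛ) where
  Hom M N := Hom ℛ M N
  id M := ⟨LinearMap.id, fun _ _ h => h⟩
  comp f g := ⟨g.toLin ∘ₗ f.toLin, fun gg x h => g.grades _ _ (f.grades _ _ h)⟩
  id_comp f := rfl
  comp_id f := rfl
  assoc f g h := rfl

end GrMod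

end GrModLib
/-! ### Library: the induced graded module `R ⊗_A X` and its components. -/

section TCompLib

universe u1 u3

variable {k : Type*} {R : Type u1} {G : Type*}
  [CommRing k] [Ring R] [Algebra k R] [AddGroup G]
variable (ℛ : G → Submodule k R) [SetLike.GradedMonoid ℛ]

/-- The `g`-component of the induced graded module `R ⊗_A X`: the additive subgroup
generated by the classes of tensors `r ⊗ x` with `r ∈ ℛ g`. -/
noncomputable def tcomp (X : Type u3) [AddCommGroup X] [Module ↥(ℛ 0) X] (g : G) :
    AddSubgroup (NCT ↥(ℛ 0) R X) :=
  AddSubgroup.closure {z | ∃ r : R, r ∈ ℛ g ∧ ∃ x : X, z = NCT.mk ↥(ℛ 0) r x}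

end TCompLib

/-!
STATEMENT 3: If `R` is a strongly `G`-graded `k`-algebra with `A = R₁` (written
`ℛ 0`), then the induction functor `R ⊗_A − : A-Mod → R-Gr` is an equivalence of
categories, with quasi-inverse the functor sending a graded module `M` to its
identity component `M₁`.
-/

section Statement3

open CategoryTheory

variable {k : Type} {R : Type} {G : Type}
  [CommRing k] [Ring R] [Algebra k R] [AddGroup G] [DecidableEq G]
variable (ℛ : G → Submodule k R) [SetLike.GradedMonoid ℛ]

/-- The identity-component functor `R-Gr → A-Mod`, `M ↦ M₁`. -/
def componentFunctor : GrMod.{0} ℛ ⥤ ModuleCat.{0} ↥(ℛ 0) where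
  obj M := ModuleCat.of ↥(ℛ 0) ↥(M.grading 0)
  map {M N} f := ModuleCat.ofHom
    { toFun := fun x => ⟨f.toLin x.1, f.grades 0 x.1 x.2⟩
      map_add' := fun x y => Subtype.ext (map_add f.toLin x.1 y.1)
      map_smul' := fun a x => Subtype.ext (map_smul f.toLin (a : R) x.1) }
  map_id M := rfl
  map_comp f g := rfl

/-!
The induced module `R ⊗_A X` is graded by the images of `R_g ⊗ X`: the degree projections of
`R` are right `A`-linear, so they induce projections of `R ⊗_A X`, which split it as a direct
sum. The unit `x ↦ 1 ⊗ x` identifies `X` with the degree-`1` part, with left inverse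
`r ⊗ x ↦ r₁ • x`. The counit `R ⊗_A M₁ → M`, `r ⊗ m ↦ r • m`, is graded; strong grading
writes `1 = ∑ aᵢ bᵢ` with `aᵢ ∈ R_g`, `bᵢ ∈ R_{g⁻¹}`, and then `m ↦ ∑ aᵢ ⊗ bᵢ • m` inverts it
in degree `g`. A graded map that is bijective in every degree is bijective.
-/

noncomputable section

open MulOpposite
open scoped DirectSum

namespace NCT

variable {A : Type*} [Ring A] {M N : Type*} [AddCommGroup M] [AddCommGroup N]
  [Module Aᵐᵒᵖ M] [Module A N]

@[simp] lemma mk_zero_left (n : N) : mk A (0 : M) n = 0 :=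
  congrArg QuotientAddGroup.mk (TensorProduct.zero_tmul M n)

@[elab_as_elim]
lemma induction_on {p : NCT A M N → Prop} (z : NCT A M N) (zero : p 0)
    (mk : ∀ m n, p (mk A m n)) (add : ∀ x y, p x → p y → p (x + y)) : p z :=
  QuotientAddGroup.induction_on z fun t => by
    induction t using TensorProduct.induction_on with
    | zero => exact zero
    | tmul m n => exact mk m n
    | add x y hx hy => exact add _ _ hx hy

lemma addHom_ext {P : Type*} [AddCommGroup P] {f f' : NCT A M N →+ P}
    (h : ∀ m n, f (mk A m n) = f' (mk A m n)) : f = f' :=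
  AddMonoidHom.ext fun z => induction_on z (by simp only [map_zero]) h
    fun x y hx hy => by simp only [map_add, hx, hy]

lemma linearMap_ext {C P : Type*} [Ring C] [Module C M] [SMulCommClass C Aᵐᵒᵖ M]
    [AddCommGroup P] [Module C P] {f f' : NCT A M N →ₗ[C] P}
    (h : ∀ m n, f (mk A m n) = f' (mk A m n)) : f = f' :=
  LinearMap.toAddMonoidHom_injective (addHom_ext h)

def lift {P : Type*} [AddCommGroup P] (f : M →+ N →+ P)
    (hf : ∀ (a : A) m n, f (op a • m) n = f m (a • n)) : NCT A M N →+ P :=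
  QuotientAddGroup.lift _
    (TensorProduct.liftAddHom f fun z m n => by
      simp only [map_zsmul, AddMonoidHom.smul_apply]) <|
    (AddSubgroup.closure_le _).2 <| by
      rintro _ ⟨a, m, n, rfl⟩
      simp [hf]

def mkAddHom (A : Type*) [Ring A] {M N : Type*} [AddCommGroup M] [AddCommGroup N]
    [Module Aᵐᵒᵖ M] [Module A N] (m : M) : N →+ NCT A M N :=
  AddMonoidHom.mk' (mk A m) (mk_add_right m)


end NCT

theorem DirectSum.IsInternal.bijective_of_bijective_components {ι : Type*} [DecidableEq ι]
    {M N : Type*} [AddCommGroup M] [AddCommGroup N] {A : ι → AddSubgroup M}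
    {B : ι → AddSubgroup N} (hA : DirectSum.IsInternal A) (hB : DirectSum.IsInternal B)
    (f : M →+ N) (f' : ∀ i, A i →+ B i) (hf' : ∀ i x, (f' i x : N) = f x)
    (hbij : ∀ i, Function.Bijective (f' i)) : Function.Bijective f := by
  have hcomm : f.comp (DirectSum.coeAddMonoidHom A)
      = (DirectSum.coeAddMonoidHom B).comp (DirectSum.map f') := by
    ext i x
    simp [hf']
  have hmap : Function.Bijective (DirectSum.map f') :=
    ⟨(DirectSum.map_injective f').2 fun i => (hbij i).1,
      (DirectSum.map_surjective f').2 fun i => (hbij i).2⟩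
  rw [← Function.Bijective.of_comp_iff f hA, ← AddMonoidHom.coe_comp, hcomm,
    AddMonoidHom.coe_comp]
  exact hB.comp hmap

section InducedModule

variable {ℛ} {X : Type*} [AddCommGroup X] [Module ↥(ℛ 0) X]

section

omit [DecidableEq G]

lemma mk_mem_tcomp {g : G} {r : R} (hr : r ∈ ℛ g) (x : X) :
    NCT.mk ↥(ℛ 0) r x ∈ tcomp ℛ X g :=
  AddSubgroup.subset_closure ⟨r, hr, x, rfl⟩

lemma tcomp_le {g : G} {S : AddSubgroup (NCT ↥(ℛ 0) R X)}
    (h : ∀ r ∈ ℛ g, ∀ x : X, NCT.mk ↥(ℛ 0) r x ∈ S) : tcomp ℛ X g ≤ S :=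
  (AddSubgroup.closure_le S).2 fun _ ⟨r, hr, x, hz⟩ => hz ▸ h r hr x

lemma smul_mem_tcomp {g h : G} {r : R} {z : NCT ↥(ℛ 0) R X} (hr : r ∈ ℛ g)
    (hz : z ∈ tcomp ℛ X h) : r • z ∈ tcomp ℛ X (g + h) :=
  tcomp_le (S := (tcomp ℛ X (g + h)).comap (DistribSMul.toAddMonoidHom (NCT ↥(ℛ 0) R X) r))
    (fun s hs x => by
      simpa [NCT.smul_mk] using mk_mem_tcomp (SetLike.GradedMul.mul_mem hr hs) x) hz

lemma mk_one_balanced {a : R} (ha : a ∈ ℛ 0) (x : X) :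
    NCT.mk ↥(ℛ 0) a x = NCT.mk ↥(ℛ 0) (1 : R) ((⟨a, ha⟩ : ↥(ℛ 0)) • x) := by
  rw [← NCT.mk_balanced]
  simp

end

variable [DirectSum.Decomposition ℛ]

lemma coe_decompose_mul_of_mem_zero (r : R) {a : R} (ha : a ∈ ℛ 0) (g : G) :
    (DirectSum.decompose ℛ (r * a) g : R) = DirectSum.decompose ℛ r g * a := by
  let _ : GradedRing ℛ := {}
  have h := DirectSum.coe_decompose_mul_add_of_right_mem ℛ (a := r) (i := g) ha
  rwa [add_zero] at h

variable (ℛ) in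
def degreeProj (g : G) : R →+ R :=
  (ℛ g).toAddSubgroup.subtype.comp
    ((DFinsupp.evalAddMonoidHom g).comp (DirectSum.decomposeAddEquiv ℛ).toAddMonoidHom)

variable (X) in
def tensorDegreeProj (g : G) : NCT ↥(ℛ 0) R X →+ NCT ↥(ℛ 0) R X :=
  NCT.mapLeft (degreeProj ℛ g) fun a r => coe_decompose_mul_of_mem_zero r a.unop.2 g

lemma tensorDegreeProj_mk (g : G) (r : R) (x : X) :
    tensorDegreeProj X g (NCT.mk ↥(ℛ 0) r x)
      = NCT.mk ↥(ℛ 0) (DirectSum.decompose ℛ r g : R) x :=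
  rfl

lemma tensorDegreeProj_of_mem_same {g : G} {z : NCT ↥(ℛ 0) R X} (hz : z ∈ tcomp ℛ X g) :
    tensorDegreeProj X g z = z :=
  tcomp_le (S := AddMonoidHom.eqLocus _ (AddMonoidHom.id _)) (fun r hr x => by
    change tensorDegreeProj X g _ = _
    rw [tensorDegreeProj_mk, DirectSum.decompose_of_mem_same ℛ hr]
    rfl) hz

lemma tensorDegreeProj_of_mem_ne {g h : G} (hgh : h ≠ g) {z : NCT ↥(ℛ 0) R X}
    (hz : z ∈ tcomp ℛ X h) : tensorDegreeProj X g z = 0 :=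
  tcomp_le (S := (tensorDegreeProj X g).ker) (fun r hr x => by
    simp [tensorDegreeProj_mk, DirectSum.decompose_of_mem_ne ℛ hr hgh]) hz

lemma tensorDegreeProj_coe (w : ⨁ g, ↥(tcomp ℛ X g)) (g : G) :
    tensorDegreeProj X g (DirectSum.coeAddMonoidHom (tcomp ℛ X) w) = w g := by
  induction w using DirectSum.induction_on with
  | zero => simp
  | of h z =>
    rw [DirectSum.coeAddMonoidHom_of]
    obtain rfl | hgh := eq_or_ne h g
    · rw [tensorDegreeProj_of_mem_same z.2, DirectSum.of_eq_same]
    · rw [tensorDegreeProj_of_mem_ne hgh z.2, DirectSum.of_eq_of_ne _ _ _ hgh.symm]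
      rfl
  | add w w' hw hw' => simp [hw, hw']

variable (ℛ X) in
lemma isInternal_tcomp : DirectSum.IsInternal (tcomp ℛ X) := by
  refine ⟨fun w w' h => DirectSum.ext fun g => Subtype.ext ?_, fun z => ?_⟩
  · rw [← tensorDegreeProj_coe, ← tensorDegreeProj_coe, h]
  · change z ∈ (DirectSum.coeAddMonoidHom (tcomp ℛ X)).range
    induction z using NCT.induction_on with
    | zero => exact zero_mem _
    | add z z' hz hz' => exact add_mem hz hz'
    | mk r x =>
      induction r using DirectSum.Decomposition.inductionOn ℛ with
      | zero => simp
      | homogeneous r => exact ⟨DirectSum.of _ _ ⟨_, mk_mem_tcomp r.2 x⟩, by simp⟩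
      | add r s hr hs => simpa [NCT.mk_add_left] using add_mem hr hs

end InducedModule

section Unit

variable [DirectSum.Decomposition ℛ]

def GrMod.induced (X : Type v) [AddCommGroup X] [Module ↥(ℛ 0) X] : GrMod.{v} ℛ where
  carrier := NCT ↥(ℛ 0) R X
  grading := tcomp ℛ X
  smul_mem' := smul_mem_tcomp
  internal' := isInternal_tcomp ℛ X

def inductionFunctor : ModuleCat.{0} ↥(ℛ 0) ⥤ GrMod.{0} ℛ where
  obj X := GrMod.induced ℛ X
  map f :=
    { toLin := NCT.lmapRight f.hom
      grades := fun _ _ hz => tcomp_le (S := (tcomp ℛ _ _).comap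
          (NCT.lmapRight (C := R) f.hom).toAddMonoidHom)
        (fun _ hr x => mk_mem_tcomp hr (f.hom x)) hz }
  map_id _ := GrMod.Hom.ext (NCT.linearMap_ext fun _ _ => rfl)
  map_comp _ _ := GrMod.Hom.ext (NCT.linearMap_ext fun _ _ => rfl)

variable (X : Type*) [AddCommGroup X] [Module ↥(ℛ 0) X]

def unitMap : X →ₗ[↥(ℛ 0)] ↥((GrMod.induced ℛ X).grading 0) where
  toFun x := ⟨NCT.mk ↥(ℛ 0) (1 : R) x, mk_mem_tcomp (SetLike.one_mem_graded ℛ) x⟩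
  map_add' x y := Subtype.ext (NCT.mk_add_right _ x y)
  map_smul' a x := Subtype.ext <| by
    change _ = (a : R) • NCT.mk ↥(ℛ 0) (1 : R) x
    rw [NCT.smul_mk, smul_eq_mul, mul_one, mk_one_balanced a.2]

def degreeZeroAction : NCT ↥(ℛ 0) R X →+ X :=
  NCT.lift ((smulAddHom ↥(ℛ 0) X).comp
      ((DFinsupp.evalAddMonoidHom 0).comp (DirectSum.decomposeAddEquiv ℛ).toAddMonoidHom))
    fun a r x => by
      change DirectSum.decompose ℛ (r * a) 0 • x = DirectSum.decompose ℛ r 0 • a • x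
      rw [← mul_smul]
      congr 1
      exact Subtype.ext (coe_decompose_mul_of_mem_zero r a.2 0)

variable {X} in
lemma degreeZeroAction_mk_one (x : X) :
    degreeZeroAction ℛ X (NCT.mk ↥(ℛ 0) (1 : R) x) = x := by
  change DirectSum.decompose ℛ (1 : R) 0 • x = x
  rw [show DirectSum.decompose ℛ (1 : R) 0 = 1 from
    Subtype.ext (DirectSum.decompose_of_mem_same ℛ (SetLike.one_mem_graded ℛ)), one_smul]

lemma unitMap_bijective : Function.Bijective (unitMap ℛ X) := by
  refine ⟨fun x y h => ?_, fun z => ?_⟩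
  · rw [← degreeZeroAction_mk_one ℛ x, ← degreeZeroAction_mk_one ℛ y]
    exact congrArg (fun z => degreeZeroAction ℛ X z.1) h
  · obtain ⟨x, hx⟩ : z.1 ∈ (NCT.mkAddHom ↥(ℛ 0) (1 : R)).range :=
      tcomp_le (S := (NCT.mkAddHom ↥(ℛ 0) (1 : R)).range)
        (fun r hr x => ⟨_, (mk_one_balanced hr x).symm⟩) z.2
    exact ⟨x, Subtype.ext hx⟩

def inductionUnitIso : 𝟭 (ModuleCat.{0} ↥(ℛ 0)) ≅ inductionFunctor ℛ ⋙ componentFunctor ℛ :=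
  NatIso.ofComponents
    (fun X => (LinearEquiv.ofBijective (unitMap ℛ X) (unitMap_bijective ℛ X)).toModuleIso)
    fun _ => ModuleCat.hom_ext (LinearMap.ext fun _ => rfl)

end Unit

section Counit

variable {ℛ} (M : GrMod.{v} ℛ)

def counit : NCT ↥(ℛ 0) R ↥(M.grading 0) →ₗ[R] M.carrier where
  toFun := NCT.lift ((smulAddHom R M.carrier).compl₂ (M.grading 0).subtype)
    fun (a : ↥(ℛ 0)) r x => by simp [mul_smul]
  map_add' := map_add _
  map_smul' s z := by
    induction z using NCT.induction_on with
    | zero => simp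
    | add z z' hz hz' => simp_all [smul_add]
    | mk r x =>
      change (s * r) • (x : M.carrier) = s • r • (x : M.carrier)
      rw [mul_smul]

lemma counit_mk (r : R) (x : ↥(M.grading 0)) :
    counit M (NCT.mk ↥(ℛ 0) r x) = r • (x : M.carrier) := rfl

lemma counit_mem_grading {g : G} {z : NCT ↥(ℛ 0) R ↥(M.grading 0)}
    (hz : z ∈ tcomp ℛ ↥(M.grading 0) g) : counit M z ∈ M.grading g :=
  tcomp_le (S := (M.grading g).comap (counit M).toAddMonoidHom)
    (fun r hr x => by simpa [counit_mk] using M.smul_mem' hr x.2) hz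

lemma exists_tensor_section_of_mem_mul (g : G) {u : R} (hu : u ∈ ℛ g * ℛ (-g)) :
    ∃ s : ↥(M.grading g) →+ NCT ↥(ℛ 0) R ↥(M.grading 0),
      (∀ m, s m ∈ tcomp ℛ ↥(M.grading 0) g) ∧ (∀ m, counit M (s m) = u • (m : M.carrier)) ∧
      ∀ r ∈ ℛ g, ∀ (x : ↥(M.grading 0)) (m : ↥(M.grading g)),
        (m : M.carrier) = r • (x : M.carrier) → s m = NCT.mk ↥(ℛ 0) (u * r) x := by
  refine Submodule.mul_induction_on hu (fun a ha b hb => ?_) fun u v hu hv => ?_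
  · have hbm : ∀ m : ↥(M.grading g), b • (m : M.carrier) ∈ M.grading 0 := fun m => by
      simpa only [neg_add_cancel] using M.smul_mem' hb m.2
    refine ⟨(NCT.mkAddHom ↥(ℛ 0) a).comp (((DistribSMul.toAddMonoidHom M.carrier b).comp
      (M.grading g).subtype).codRestrict (M.grading 0) hbm), fun m => mk_mem_tcomp ha _,
      fun m => (mul_smul a b (m : M.carrier)).symm, fun r hr x m hm => ?_⟩
    have hbr : b * r ∈ ℛ 0 := by simpa using SetLike.GradedMul.mul_mem hb hr
    change NCT.mk ↥(ℛ 0) a (⟨b • (m : M.carrier), hbm m⟩ : ↥(M.grading 0)) = _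
    rw [mul_assoc, show a * (b * r) = op (⟨b * r, hbr⟩ : ↥(ℛ 0)) • a from rfl,
      NCT.mk_balanced]
    congr 1
    exact Subtype.ext (by simp [hm, mul_smul])
  · obtain ⟨s, hs_mem, hs_counit, hs_mk⟩ := hu
    obtain ⟨t, ht_mem, ht_counit, ht_mk⟩ := hv
    refine ⟨s + t, fun m => add_mem (hs_mem m) (ht_mem m), fun m => ?_,
      fun r hr x m hm => ?_⟩
    · simp [hs_counit, ht_counit, add_smul]
    · simp [hs_mk r hr x m hm, ht_mk r hr x m hm, add_mul, NCT.mk_add_left]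

def counitComponent (g : G) : ↥(tcomp ℛ ↥(M.grading 0) g) →+ ↥(M.grading g) :=
  ((counit M).toAddMonoidHom.comp (tcomp ℛ ↥(M.grading 0) g).subtype).codRestrict _
    fun z => counit_mem_grading M z.2

lemma coe_counitComponent (g : G) (z : ↥(tcomp ℛ ↥(M.grading 0) g)) :
    (counitComponent M g z : M.carrier) = counit M z := rfl

lemma counitComponent_bijective (hstrong : IsStronglyGraded ℛ) (g : G) :
    Function.Bijective (counitComponent M g) := by
  have hone : (1 : R) ∈ ℛ g * ℛ (-g) := by
    rw [hstrong, add_neg_cancel]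
    exact SetLike.one_mem_graded ℛ
  obtain ⟨s, hs_mem, hs_counit, hs_mk⟩ := exists_tensor_section_of_mem_mul M g hone
  have hrange : tcomp ℛ ↥(M.grading 0) g ≤ s.range := tcomp_le fun r hr x =>
    ⟨⟨r • (x : M.carrier), by simpa using M.smul_mem' hr x.2⟩, by simpa using hs_mk r hr x _ rfl⟩
  have hinv : ∀ m (z : ↥(tcomp ℛ ↥(M.grading 0) g)), s m = z →
      (counitComponent M g z : M.carrier) = m := fun m z hm => by
    rw [coe_counitComponent, ← hm, hs_counit, one_smul]
  refine ⟨fun z z' h => ?_, fun m => ⟨⟨s m, hs_mem m⟩, Subtype.ext (hinv m _ rfl)⟩⟩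
  obtain ⟨m, hm⟩ := hrange z.2
  obtain ⟨m', hm'⟩ := hrange z'.2
  have hmm' : m = m' := Subtype.ext (by rw [← hinv m z hm, ← hinv m' z' hm', h])
  exact Subtype.ext (by rw [← hm, ← hm', hmm'])

variable [DirectSum.Decomposition ℛ]

lemma counit_bijective (hstrong : IsStronglyGraded ℛ) : Function.Bijective (counit M) :=
  (isInternal_tcomp ℛ _).bijective_of_bijective_components M.internal'
    (counit M).toAddMonoidHom (counitComponent M) (fun _ _ => rfl)
    (counitComponent_bijective M hstrong)

def counitEquiv (hstrong : IsStronglyGraded ℛ) :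
    NCT ↥(ℛ 0) R ↥(M.grading 0) ≃ₗ[R] M.carrier :=
  LinearEquiv.ofBijective (counit M) (counit_bijective M hstrong)

lemma counitEquiv_symm_mem_tcomp (hstrong : IsStronglyGraded ℛ) {g : G} {y : M.carrier}
    (hy : y ∈ M.grading g) : (counitEquiv M hstrong).symm y ∈ tcomp ℛ ↥(M.grading 0) g := by
  obtain ⟨z, hz⟩ := (counitComponent_bijective M hstrong g).2 ⟨y, hy⟩
  rw [(LinearEquiv.symm_apply_eq _).2 (congrArg Subtype.val hz).symm]
  exact z.2

end Counit

variable {ℛ} in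
def GrMod.isoMk {M N : GrMod.{v} ℛ} (e : M.carrier ≃ₗ[R] N.carrier)
    (he : ∀ g x, x ∈ M.grading g → e x ∈ N.grading g)
    (he' : ∀ g y, y ∈ N.grading g → e.symm y ∈ M.grading g) : M ≅ N where
  hom := ⟨e.toLinearMap, he⟩
  inv := ⟨e.symm.toLinearMap, he'⟩
  hom_inv_id := GrMod.Hom.ext (LinearMap.ext e.symm_apply_apply)
  inv_hom_id := GrMod.Hom.ext (LinearMap.ext e.apply_symm_apply)

def inductionCounitIso [DirectSum.Decomposition ℛ] (hstrong : IsStronglyGraded ℛ) :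
    componentFunctor ℛ ⋙ inductionFunctor ℛ ≅ 𝟭 (GrMod.{0} ℛ) :=
  NatIso.ofComponents
    (fun M => GrMod.isoMk (counitEquiv M hstrong) (fun _ _ hz => counit_mem_grading M hz)
      fun _ _ hy => counitEquiv_symm_mem_tcomp M hstrong hy)
    fun f => GrMod.Hom.ext (NCT.linearMap_ext fun r x => (map_smul f.toLin r x.1).symm)

end

theorem induction_functor_is_equivalence
    [DirectSum.Decomposition ℛ] (hstrong : IsStronglyGraded ℛ) :
    ∃ Ind : ModuleCat.{0} ↥(ℛ 0) ⥤ GrMod.{0} ℛ,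
      -- `Ind` is the induction functor `X ↦ R ⊗_A X` with the canonical grading ...
      (∀ X : ModuleCat.{0} ↥(ℛ 0),
        ∃ φ : (Ind.obj X).carrier ≃ₗ[R] NCT ↥(ℛ 0) R X,
          ∀ g : G, ((Ind.obj X).grading g).map φ.toLinearMap.toAddMonoidHom
            = tcomp ℛ X g) ∧
      -- ... and it is an equivalence with quasi-inverse `M ↦ M₁`:
      Nonempty (Ind ⋙ componentFunctor ℛ ≅ 𝟭 (ModuleCat.{0} ↥(ℛ 0))) ∧
      Nonempty (componentFunctor ℛ ⋙ Ind ≅ 𝟭 (GrMod.{0} ℛ)) :=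
  ⟨inductionFunctor ℛ, fun _ => ⟨LinearEquiv.refl R _, fun _ => AddSubgroup.map_id _⟩,
    ⟨(inductionUnitIso ℛ).symm⟩, ⟨inductionCounitIso ℛ hstrong⟩⟩

end Statement3
end

section
/- Let R be a strongly G-graded algebra over a field k, with G finite and A = R_1 finite dimensional. Then R is self-injective if and only if A is self-injective. -/
/-!
Write `A = ℛ 0` and `π₀ : R → A` for the projection onto degree `0`. Strong grading gives, for
each `g`, elements `uᵢ ∈ ℛ g`, `vᵢ ∈ ℛ (-g)` with `∑ uᵢ vᵢ = 1`; taken over all `g` they satisfy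
`∑ uᵢ π₀(vᵢ x) = x = ∑ π₀(x uᵢ) vᵢ`, i.e. they are dual bases making `A ⊆ R` a Frobenius
extension. Hence for every `R`-module `Y`, composing with `π₀` is a bijection
`Hom_R(Y, R) ≃ Hom_A(Y, A)`, natural in `Y`, with inverse `φ ↦ (y ↦ ∑ uᵢ φ(vᵢ y))`.
Baer's criterion now transfers injectivity both ways: to extend an `R`-linear map from a left
ideal `J` of `R`, extend the corresponding `A`-linear map `J → A` to `R`; to extend an `A`-linear
map `φ` from an ideal `I` of `A`, note that `π₀` maps the left ideal `R I` into `I`, and extend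
the `R`-linear map corresponding to `φ ∘ π₀ : R I → A`.
-/

open DirectSum

theorem Submodule.exists_fin_sum_mul_eq_of_mem_mul {k R : Type*} [CommSemiring k] [Semiring R]
    [Algebra k R] {M N : Submodule k R} {x : R} (hx : x ∈ M * N) :
    ∃ (n : ℕ) (u v : Fin n → R),
      (∀ i, u i ∈ M) ∧ (∀ i, v i ∈ N) ∧ ∑ i, u i * v i = x := by
  induction hx using Submodule.mul_induction_on' with
  | mem_mul_mem m hm n hn =>
    exact ⟨1, fun _ => m, fun _ => n, fun _ => hm, fun _ => hn, by simp⟩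
  | add x _ y _ hx hy =>
    obtain ⟨m₁, u₁, v₁, hu₁, hv₁, rfl⟩ := hx
    obtain ⟨m₂, u₂, v₂, hu₂, hv₂, rfl⟩ := hy
    refine ⟨m₁ + m₂, Fin.append u₁ u₂, Fin.append v₁ v₂, Fin.addCases ?_ ?_,
      Fin.addCases ?_ ?_, by simp [Fin.sum_univ_add]⟩ <;> simpa

section GradeZero

variable {k R G : Type*} [CommRing k] [Ring R] [Algebra k R] [AddGroup G]
variable (ℛ : G → Submodule k R)

section GradedMonoid

variable [SetLike.GradedMonoid ℛ]

instance GrComp.instIsScalarTowerSelf : IsScalarTower ↥(ℛ 0) R R :=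
  ⟨fun a r s => mul_assoc (a : R) r s⟩

@[simp] lemma GrComp.coe_mul (a b : ℛ 0) : ((a * b : ℛ 0) : R) = a * b := rfl

def gradeZeroSubtype : ℛ 0 →ₗ[ℛ 0] R where
  toFun := Subtype.val
  map_add' _ _ := rfl
  map_smul' _ _ := rfl

lemma GrComp.coe_smul_eq_smul {Y : Type*} [AddCommGroup Y] [Module R Y] [Module (ℛ 0) Y]
    [IsScalarTower (ℛ 0) R Y] (a : ℛ 0) (y : Y) : (a : R) • y = a • y := by
  simpa using smul_one_smul R a y

end GradedMonoid

variable [DecidableEq G] [GradedRing ℛ]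

def gradeZeroProj : R →ₗ[ℛ 0] ℛ 0 where
  toFun x := decompose ℛ x 0
  map_add' x y := by rw [decompose_add, DirectSum.add_apply]
  map_smul' a x := Subtype.ext (coe_decompose_mul_of_left_mem_zero ℛ a.2)

variable {ℛ}

@[simp] lemma gradeZeroProj_coe (a : ℛ 0) : gradeZeroProj ℛ a = a :=
  Subtype.ext (decompose_of_mem_same ℛ a.2)

lemma gradeZeroProj_mul_of_mem_zero (x : R) (a : ℛ 0) :
    gradeZeroProj ℛ (x * a) = gradeZeroProj ℛ x * a :=
  Subtype.ext (coe_decompose_mul_of_right_mem_zero ℛ a.2)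

lemma coe_gradeZeroProj_mul_of_mem_neg {g : G} {x : R} (hx : x ∈ ℛ (-g)) (y : R) :
    (gradeZeroProj ℛ (x * y) : R) = x * decompose ℛ y g := by
  have := coe_decompose_mul_add_of_left_mem ℛ (b := y) (j := g) hx
  rwa [neg_add_cancel] at this

lemma coe_gradeZeroProj_mul_of_mem (x : R) {g : G} {y : R} (hy : y ∈ ℛ g) :
    (gradeZeroProj ℛ (x * y) : R) = decompose ℛ x (-g) * y := by
  have := coe_decompose_mul_add_of_right_mem ℛ (a := x) (i := -g) hy
  rwa [neg_add_cancel] at this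

lemma sum_coe_decompose [Fintype G] (x : R) : ∑ g, (decompose ℛ x g : R) = x := by
  conv_rhs => rw [← (decompose ℛ).symm_apply_apply x, ← sum_univ_of (decompose ℛ x)]
  simp only [decompose_symm_sum, decompose_symm_of]

lemma gradeZeroProj_mem_of_mem_span {I : Ideal (ℛ 0)} {x : R}
    (hx : x ∈ Submodule.span R (Subtype.val '' (I : Set (ℛ 0)))) :
    gradeZeroProj ℛ x ∈ I := by
  suffices ∀ s : R, gradeZeroProj ℛ (s * x) ∈ I by simpa using this 1
  induction hx using Submodule.span_induction with
  | mem x hx =>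
    obtain ⟨a, ha, rfl⟩ := hx
    intro s
    rw [gradeZeroProj_mul_of_mem_zero]
    exact I.mul_mem_left _ ha
  | zero => simp
  | add x y _ _ hx hy => intro s; rw [mul_add, map_add]; exact I.add_mem (hx s) (hy s)
  | smul r x _ hx => intro s; rw [smul_eq_mul, ← mul_assoc]; exact hx (s * r)

variable (ℛ) in
/-- Dual bases of the Frobenius extension `ℛ 0 ⊆ R` with respect to `gradeZeroProj ℛ`. -/
structure GradeZeroDualBasis (ι : Type*) [Fintype ι] where
  left : ι → R
  right : ι → R
  sum_left_mul_gradeZeroProj : ∀ x, ∑ i, left i * gradeZeroProj ℛ (right i * x) = x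
  sum_gradeZeroProj_mul_right : ∀ x, ∑ i, (gradeZeroProj ℛ (x * left i) : R) * right i = x

theorem IsStronglyGraded.exists_gradeZeroDualBasis [Fintype G] (h : IsStronglyGraded ℛ) :
    ∃ n : G → ℕ, Nonempty (GradeZeroDualBasis ℛ (Σ g, Fin (n g))) := by
  have one_mem (g : G) : (1 : R) ∈ ℛ g * ℛ (-g) := by
    rw [h, add_neg_cancel]
    exact SetLike.one_mem_graded ℛ
  choose n u v hu hv huv using fun g => Submodule.exists_fin_sum_mul_eq_of_mem_mul (one_mem g)
  refine ⟨n, ⟨fun q => u q.1 q.2, fun q => v q.1 q.2, fun x => ?_, fun x => ?_⟩⟩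
  · calc ∑ q : Σ g, Fin (n g), u q.1 q.2 * gradeZeroProj ℛ (v q.1 q.2 * x)
        = ∑ g, (∑ i, u g i * v g i) * decompose ℛ x g := by
          simp only [Fintype.sum_sigma, Finset.sum_mul, mul_assoc,
            coe_gradeZeroProj_mul_of_mem_neg (hv _ _)]
      _ = x := by simp only [huv, one_mul, sum_coe_decompose]
  · calc ∑ q : Σ g, Fin (n g), (gradeZeroProj ℛ (x * u q.1 q.2) : R) * v q.1 q.2
        = ∑ g, decompose ℛ x (-g) * ∑ i, u g i * v g i := by
          simp only [Fintype.sum_sigma, Finset.mul_sum, ← mul_assoc,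
            coe_gradeZeroProj_mul_of_mem x (hu _ _)]
      _ = x := by
          simp only [huv, mul_one]
          exact (Equiv.sum_comp (Equiv.neg G) (fun g => (decompose ℛ x g : R))).trans
            (sum_coe_decompose x)

namespace GradeZeroDualBasis

variable {ι : Type*} [Fintype ι] (D : GradeZeroDualBasis ℛ ι)
variable {Y : Type*} [AddCommGroup Y] [Module R Y] [Module (ℛ 0) Y] [IsScalarTower (ℛ 0) R Y]

lemma apply_smul_eq_sum (φ : Y →ₗ[ℛ 0] ℛ 0) (z : R) (y : Y) :
    φ (z • y) = ∑ i, gradeZeroProj ℛ (z * D.left i) * φ (D.right i • y) := by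
  conv_lhs => rw [← D.sum_gradeZeroProj_mul_right z]
  simp only [Finset.sum_smul, map_sum, mul_smul, GrComp.coe_smul_eq_smul, map_smul, smul_eq_mul]

def lift (φ : Y →ₗ[ℛ 0] ℛ 0) : Y →ₗ[R] R where
  toFun y := ∑ i, D.left i * φ (D.right i • y)
  map_add' y z := by
    simp only [smul_add, map_add, Submodule.coe_add, mul_add, Finset.sum_add_distrib]
  map_smul' r y := calc
    ∑ i, D.left i * φ (D.right i • r • y)
      = ∑ i, ∑ j,
          D.left i * gradeZeroProj ℛ (D.right i * (r * D.left j)) * φ (D.right j • y) := by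
        refine Finset.sum_congr rfl fun i _ => ?_
        rw [← mul_smul, D.apply_smul_eq_sum, Submodule.coe_sum, Finset.mul_sum]
        simp only [GrComp.coe_mul, mul_assoc]
    _ = ∑ j, (∑ i, D.left i * gradeZeroProj ℛ (D.right i * (r * D.left j))) *
          φ (D.right j • y) := by
        rw [Finset.sum_comm]
        simp only [Finset.sum_mul]
    _ = r * ∑ j, D.left j * φ (D.right j • y) := by
        simp only [D.sum_left_mul_gradeZeroProj, Finset.mul_sum, mul_assoc]

lemma lift_apply (φ : Y →ₗ[ℛ 0] ℛ 0) (y : Y) :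
    D.lift φ y = ∑ i, D.left i * φ (D.right i • y) := rfl

def homEquiv : (Y →ₗ[R] R) ≃ (Y →ₗ[ℛ 0] ℛ 0) where
  toFun ψ := gradeZeroProj ℛ ∘ₗ ψ.restrictScalars (ℛ 0)
  invFun := D.lift
  left_inv ψ := LinearMap.ext fun y => by
    simp only [lift_apply, LinearMap.comp_apply, LinearMap.restrictScalars_apply, map_smul,
      smul_eq_mul, D.sum_left_mul_gradeZeroProj]
  right_inv φ := LinearMap.ext fun y => by
    simp only [LinearMap.comp_apply, LinearMap.restrictScalars_apply, lift_apply, map_sum,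
      gradeZeroProj_mul_of_mem_zero]
    simpa using (D.apply_smul_eq_sum φ 1 y).symm

variable {X : Type*} [AddCommGroup X] [Module R X] [Module (ℛ 0) X] [IsScalarTower (ℛ 0) R X]

lemma homEquiv_comp (ψ : Y →ₗ[R] R) (f : X →ₗ[R] Y) :
    D.homEquiv (ψ ∘ₗ f) = D.homEquiv ψ ∘ₗ f.restrictScalars (ℛ 0) := rfl

lemma homEquiv_symm_comp (φ : Y →ₗ[ℛ 0] ℛ 0) (f : X →ₗ[R] Y) :
    D.homEquiv.symm (φ ∘ₗ f.restrictScalars (ℛ 0)) = D.homEquiv.symm φ ∘ₗ f :=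
  LinearMap.ext fun x => by simp [homEquiv, lift_apply]

end GradeZeroDualBasis

variable {ι : Type*} [Fintype ι]

theorem GradeZeroDualBasis.injective_of_injective_gradeZero (D : GradeZeroDualBasis ℛ ι)
    (hA : Module.Injective (ℛ 0) (ℛ 0)) :
    Module.Injective R R := by
  refine Module.Baer.injective fun J φ => ?_
  obtain ⟨h, hh⟩ := Module.Injective.extension_property (ℛ 0) (ℛ 0) (inj := hA) J R
    (J.subtype.restrictScalars (ℛ 0)) Subtype.val_injective (D.homEquiv φ)
  have hext : D.homEquiv.symm h ∘ₗ J.subtype = φ := by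
    rw [← homEquiv_symm_comp, hh, Equiv.symm_apply_apply]
  exact ⟨D.homEquiv.symm h, fun x hx => LinearMap.congr_fun hext ⟨x, hx⟩⟩

theorem GradeZeroDualBasis.injective_gradeZero_of_injective (D : GradeZeroDualBasis ℛ ι)
    (hR : Module.Injective R R) :
    Module.Injective (ℛ 0) (ℛ 0) := by
  refine Module.Baer.injective fun I φ => ?_
  let J := Submodule.span R (Subtype.val '' (I : Set (ℛ 0)))
  let φJ : J →ₗ[ℛ 0] ℛ 0 :=
    φ ∘ₗ (gradeZeroProj ℛ ∘ₗ J.subtype.restrictScalars (ℛ 0)).codRestrict I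
      fun x => gradeZeroProj_mem_of_mem_span x.2
  obtain ⟨H, hH⟩ := Module.Injective.extension_property R R J R J.subtype Subtype.val_injective
    (D.homEquiv.symm φJ)
  have hext : D.homEquiv H ∘ₗ J.subtype.restrictScalars (ℛ 0) = φJ := by
    rw [← homEquiv_comp, hH, Equiv.apply_symm_apply]
  refine ⟨D.homEquiv H ∘ₗ gradeZeroSubtype ℛ, fun a ha => ?_⟩
  have haJ : (a : R) ∈ J := Submodule.subset_span ⟨a, ha, rfl⟩
  calc D.homEquiv H a = φJ ⟨a, haJ⟩ := LinearMap.congr_fun hext ⟨a, haJ⟩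
    _ = φ ⟨a, ha⟩ := congrArg φ (Subtype.ext (gradeZeroProj_coe a))

end GradeZero

theorem selfInjective_iff_of_stronglyGraded_general
    {k : Type*} [Field k] {G : Type*} [AddGroup G] [Finite G] [DecidableEq G]
    {R : Type*} [Ring R] [Algebra k R]
    (ℛ : G → Submodule k R) [SetLike.GradedMonoid ℛ] [DirectSum.Decomposition ℛ]
    (hstrong : IsStronglyGraded ℛ) :
    Module.Injective R R ↔ Module.Injective ↥(ℛ 0) ↥(ℛ 0) := by
  have : Fintype G := Fintype.ofFinite G
  let : GradedRing ℛ := {}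
  obtain ⟨n, ⟨D⟩⟩ := hstrong.exists_gradeZeroDualBasis
  exact ⟨D.injective_gradeZero_of_injective, D.injective_of_injective_gradeZero⟩

theorem selfInjective_iff_of_stronglyGraded
    {k : Type*} [Field k] {G : Type*} [AddGroup G] [Finite G] [DecidableEq G]
    {R : Type*} [Ring R] [Algebra k R]
    (ℛ : G → Submodule k R) [SetLike.GradedMonoid ℛ] [DirectSum.Decomposition ℛ]
    (hstrong : IsStronglyGraded ℛ)
    [FiniteDimensional k ↥(ℛ 0)] :
    Module.Injective R R ↔ Module.Injective ↥(ℛ 0) ↥(ℛ 0) :=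
  selfInjective_iff_of_stronglyGraded_general ℛ hstrong
end
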